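/- Let p, q, s ≥ 1 with q ≥ s and suppose k/s + (m−k)/q = m/p for some 1 ≤ k ≤ m. Then for all families of complex numbers (a_i) indexed by {1,…,n}^m, (∑_i |a_i|^p)^{1/p} ≤ ∏_{S ⊆ {1,…,m}, |S|=k} (∑_{i_S} (∑_{i_{Ŝ}} |a_i|^q)^{s/q})^{(1/s)·(1/binom(m,k))}. -/

import Mathlib

/-- Combine an assignment of coordinates on `S` and on its complement into a
multi-index in `Fin m → Fin n`. -/
def combineIdx {m n : ℕ} (S : Finset (Fin m))
    (g : {x // x ∈ S} → Fin n) (h : {x // x ∈ Sᶜ} → Fin n) : Fin m → Fin n :=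
  fun x => if hx : x ∈ S then g ⟨x, hx⟩ else h ⟨x, Finset.mem_compl.mpr hx⟩

/-!
Write `‖a i‖ ^ p = ∏ S, ‖a i‖ ^ (p / C)` with `C = m.choose k`, and measure the `S`-th factor in the
mixed norm whose exponent in the coordinate `x` is `s C / p` for `x ∈ S` and `q C / p` otherwise.
Every coordinate lies in `(m - 1).choose (k - 1)` of the sets `S`, so `k / s + (m - k) / q = m / p`
says exactly that in each coordinate the reciprocal exponents add up to `1`. Hölder's inequality,
applied one coordinate at a time, then bounds `∑ i, ‖a i‖ ^ p` by the product of these mixed norms.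
Since `s ≤ q`, Minkowski's inequality lets us move the coordinates outside `S` innermost, and the
resulting mixed norm is the `S`-th factor of the right-hand side.
-/

open NNReal Finset MeasureTheory
open scoped ENNReal

theorem NNReal.Lp_sum_le_sum_Lp {τ κ : Type*} [Fintype κ] (T : Finset τ) (F : τ → κ → ℝ≥0)
    {r : ℝ} (hr : 1 ≤ r) :
    (∑ j, (∑ t ∈ T, F t j) ^ r) ^ (1 / r) ≤ ∑ t ∈ T, (∑ j, F t j ^ r) ^ (1 / r) := by
  classical
  induction T using Finset.cons_induction with
  | empty => simp [zero_rpow (by positivity : r ≠ 0), (by positivity : r ≠ 0)]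
  | cons a T ha ih =>
    simp only [sum_cons]
    exact (NNReal.Lp_add_le _ _ _ hr).trans (add_le_add_right ih _)

theorem NNReal.sum_prod_le_prod_Lp {τ κ : Type*} [Fintype κ] (T : Finset τ) (f : τ → κ → ℝ≥0)
    {P : τ → ℝ} (hP : ∀ t ∈ T, 0 < P t) (hP1 : ∑ t ∈ T, 1 / P t = 1) :
    ∑ j, ∏ t ∈ T, f t j ≤ ∏ t ∈ T, (∑ j, f t j ^ P t) ^ (1 / P t) := by
  let _ : MeasurableSpace κ := ⊤
  have h := ENNReal.lintegral_prod_norm_pow_le (μ := Measure.count) T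
    (f := fun t j => ((f t j ^ P t : ℝ≥0) : ℝ≥0∞)) (fun _ _ => measurable_from_top.aemeasurable)
    hP1 fun t ht => (one_div_pos.2 (hP t ht)).le
  simp only [lintegral_count, tsum_fintype] at h
  rw [← ENNReal.coe_le_coe]
  push_cast
  calc ∑ j, ∏ t ∈ T, (f t j : ℝ≥0∞)
      = ∑ j, ∏ t ∈ T, ((f t j ^ P t : ℝ≥0) : ℝ≥0∞) ^ (1 / P t) :=
        sum_congr rfl fun j _ => prod_congr rfl fun t ht => by
          rw [← ENNReal.coe_rpow_of_nonneg _ (one_div_pos.2 (hP t ht)).le, ← rpow_mul,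
            mul_one_div_cancel (hP t ht).ne', rpow_one]
    _ ≤ ∏ t ∈ T, (∑ j, ((f t j ^ P t : ℝ≥0) : ℝ≥0∞)) ^ (1 / P t) := h
    _ = _ := prod_congr rfl fun t ht => by
        rw [ENNReal.coe_rpow_of_nonneg _ (one_div_pos.2 (hP t ht)).le, ENNReal.ofNNReal_finsetSum]

noncomputable section MixedNorm

variable {ι κ : Type*} [Fintype κ] [DecidableEq ι]

/-- Functions on `ι → κ` stand for partially summed families: `coordNorm x c f` is the `ℓ^c` norm
in the coordinate `x`, and its value no longer depends on that coordinate. -/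
def coordNorm (x : ι) (c : ℝ) (f : (ι → κ) → ℝ≥0) : (ι → κ) → ℝ≥0 :=
  fun i => (∑ j, f (Function.update i x j) ^ c) ^ (1 / c)

/-- The head of `L` is the innermost coordinate. -/
def mixedNorm (L : List ι) (e : ι → ℝ) (f : (ι → κ) → ℝ≥0) : (ι → κ) → ℝ≥0 :=
  L.foldl (fun g x => coordNorm x (e x) g) f

theorem coordNorm_mono {x : ι} {c : ℝ} (hc : 0 ≤ c) {f g : (ι → κ) → ℝ≥0}
    (h : f ≤ g) : coordNorm x c f ≤ coordNorm x c g := fun _ =>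
  rpow_le_rpow (sum_le_sum fun _ _ => rpow_le_rpow (h _) hc) (by positivity)

theorem mixedNorm_cons (x : ι) (L : List ι) (e : ι → ℝ) (f : (ι → κ) → ℝ≥0) :
    mixedNorm (x :: L) e f = mixedNorm L e (coordNorm x (e x) f) := rfl

theorem mixedNorm_append (L₁ L₂ : List ι) (e : ι → ℝ) (f : (ι → κ) → ℝ≥0) :
    mixedNorm (L₁ ++ L₂) e f = mixedNorm L₂ e (mixedNorm L₁ e f) :=
  List.foldl_append

theorem mixedNorm_mono {L : List ι} {e : ι → ℝ} (he : ∀ x ∈ L, 0 ≤ e x)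
    {f g : (ι → κ) → ℝ≥0} (h : f ≤ g) : mixedNorm L e f ≤ mixedNorm L e g := by
  induction L generalizing f g with
  | nil => exact h
  | cons x L ih =>
    simp only [List.forall_mem_cons] at he
    exact ih he.2 (coordNorm_mono he.1 h)

/-- Minkowski's inequality in `ℓ^(a / b)`. -/
theorem coordNorm_coordNorm_le {x y : ι} (hxy : x ≠ y) {a b : ℝ} (hb : 1 ≤ b) (hba : b ≤ a)
    (f : (ι → κ) → ℝ≥0) :
    coordNorm x a (coordNorm y b f) ≤ coordNorm y b (coordNorm x a f) := by
  intro i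
  have hb0 : 0 < b := by linarith
  have ha0 : 0 < a := by linarith
  set F : κ → κ → ℝ≥0 := fun j j' => f (Function.update (Function.update i x j) y j') ^ b
  have hlhs : coordNorm x a (coordNorm y b f) i
      = ((∑ j, (∑ j', F j j') ^ (a / b)) ^ (1 / (a / b))) ^ (1 / b) := by
    simp only [coordNorm, F, ← rpow_mul]
    congr 1 <;> field_simp
  have hrhs : coordNorm y b (coordNorm x a f) i
      = (∑ j', (∑ j, F j j' ^ (a / b)) ^ (1 / (a / b))) ^ (1 / b) := by
    simp only [coordNorm, F, ← rpow_mul, Function.update_comm hxy]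
    congr 1
    refine sum_congr rfl fun j' _ => ?_
    congr 1
    · refine sum_congr rfl fun j _ => ?_
      congr 1
      field_simp
    · field_simp
  rw [hlhs, hrhs]
  exact rpow_le_rpow (Lp_sum_le_sum_Lp univ (fun j' j => F j j') ((one_le_div hb0).2 hba))
    (by positivity)

theorem mixedNorm_coordNorm_le {A : List ι} {x : ι} {c : ℝ} (hc : 1 ≤ c) {e : ι → ℝ}
    (hA : ∀ y ∈ A, y ≠ x ∧ c ≤ e y) (f : (ι → κ) → ℝ≥0) :
    mixedNorm A e (coordNorm x c f) ≤ coordNorm x c (mixedNorm A e f) := by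
  induction A generalizing f with
  | nil => exact le_rfl
  | cons y A ih =>
    simp only [List.forall_mem_cons] at hA
    calc mixedNorm A e (coordNorm y (e y) (coordNorm x c f))
        ≤ mixedNorm A e (coordNorm x c (coordNorm y (e y) f)) :=
          mixedNorm_mono (fun z hz => by linarith [(hA.2 z hz).2])
            (coordNorm_coordNorm_le hA.1.1 hc hA.1.2 f)
      _ ≤ coordNorm x c (mixedNorm A e (coordNorm y (e y) f)) := ih hA.2 _

theorem mixedNorm_le_mixedNorm_filter (S : Finset ι) {e : ι → ℝ} (he : ∀ x, 1 ≤ e x)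
    (hS : ∀ x ∈ S, ∀ y ∉ S, e x ≤ e y) (L : List ι) (f : (ι → κ) → ℝ≥0) :
    mixedNorm L e f ≤ mixedNorm (L.filter (· ∉ S) ++ L.filter (· ∈ S)) e f := by
  induction L generalizing f with
  | nil => exact le_rfl
  | cons x L ih =>
    by_cases hx : x ∈ S
    · rw [List.filter_cons_of_neg (by simpa), List.filter_cons_of_pos (by simpa),
        mixedNorm_cons]
      calc mixedNorm L e (coordNorm x (e x) f)
          ≤ mixedNorm (L.filter (· ∉ S) ++ L.filter (· ∈ S)) e (coordNorm x (e x) f) := ih _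
        _ = mixedNorm (L.filter (· ∈ S)) e (mixedNorm (L.filter (· ∉ S)) e (coordNorm x (e x) f)) :=
          mixedNorm_append _ _ _ _
        _ ≤ mixedNorm (L.filter (· ∈ S)) e (coordNorm x (e x) (mixedNorm (L.filter (· ∉ S)) e f)) :=
          mixedNorm_mono (fun z _ => by linarith [he z]) <| mixedNorm_coordNorm_le (he x)
            (fun y hy => by
              have hyS : y ∉ S := by simpa using (List.mem_filter.1 hy).2
              exact ⟨fun h => hyS (h ▸ hx), hS x hx y hyS⟩) f
        _ = _ := by rw [mixedNorm_append, mixedNorm_cons]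
    · rw [List.filter_cons_of_pos (by simpa), List.filter_cons_of_neg (by simpa),
        List.cons_append, mixedNorm_cons, mixedNorm_cons]
      exact ih _

theorem mixedNorm_prod_le {τ : Type*} (L : List ι) (T : Finset τ) (e : τ → ι → ℝ)
    (he : ∀ t ∈ T, ∀ x, 0 < e t x) (he1 : ∀ x, ∑ t ∈ T, 1 / e t x = 1)
    (f : τ → (ι → κ) → ℝ≥0) :
    mixedNorm L (fun _ => 1) (∏ t ∈ T, f t) ≤ ∏ t ∈ T, mixedNorm L (e t) (f t) := by
  induction L generalizing f with
  | nil => exact le_rfl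
  | cons x L ih =>
    have hx : coordNorm x 1 (∏ t ∈ T, f t) ≤ ∏ t ∈ T, coordNorm x (e t x) (f t) := fun i => by
      simpa only [coordNorm, prod_apply, rpow_one, div_one] using
        sum_prod_le_prod_Lp T (fun t j => f t (Function.update i x j)) (fun t ht => he t ht x)
          (he1 x)
    exact (mixedNorm_mono (fun _ _ => zero_le_one) hx).trans (ih _)

def updateOn (s : Finset ι) (i : ι → κ) (g : s → κ) : ι → κ :=
  fun x => if h : x ∈ s then g ⟨x, h⟩ else i x

def blockNorm (s : Finset ι) (c : ℝ) (f : (ι → κ) → ℝ≥0) : (ι → κ) → ℝ≥0 :=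
  fun i => (∑ g : s → κ, f (updateOn s i g) ^ c) ^ (1 / c)

theorem sum_updateOn_insert {M : Type*} [AddCommMonoid M] {x : ι} {s : Finset ι} (hx : x ∉ s)
    (F : (ι → κ) → M) (i : ι → κ) :
    ∑ g : ↥(insert x s) → κ, F (updateOn (insert x s) i g)
      = ∑ g : s → κ, ∑ j, F (Function.update (updateOn s i g) x j) := by
  let E : (↥(insert x s) → κ) ≃ κ × (s → κ) :=
    ((subtypeInsertEquivOption hx).arrowCongr (Equiv.refl κ)).trans Equiv.piOptionEquivProd
  rw [← E.symm.sum_comp, Fintype.sum_prod_type, sum_comm]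
  refine sum_congr rfl fun g _ => sum_congr rfl fun j _ => congrArg F (funext fun z => ?_)
  rcases eq_or_ne z x with rfl | hzx
  · simp [E, updateOn, subtypeInsertEquivOption]
  · by_cases hzs : z ∈ s <;> simp [E, updateOn, subtypeInsertEquivOption, hzx, hzs]

theorem blockNorm_empty {c : ℝ} (hc : c ≠ 0) (f : (ι → κ) → ℝ≥0) : blockNorm ∅ c f = f := by
  funext i
  have hi : ∀ g : (∅ : Finset ι) → κ, updateOn ∅ i g = i := fun g => by
    funext x
    simp [updateOn]
  simp only [blockNorm, Fintype.sum_unique, hi, ← rpow_mul, mul_one_div_cancel hc, rpow_one]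

theorem blockNorm_insert {x : ι} {s : Finset ι} (hx : x ∉ s) {c : ℝ} (hc : c ≠ 0)
    (f : (ι → κ) → ℝ≥0) : blockNorm (insert x s) c f = blockNorm s c (coordNorm x c f) := by
  funext i
  simp only [blockNorm, coordNorm]
  rw [sum_updateOn_insert hx (fun i' => f i' ^ c)]
  simp only [← rpow_mul, one_div_mul_cancel hc, rpow_one]

theorem mixedNorm_eq_blockNorm {M : List ι} (hM : M.Nodup) {c : ℝ} (hc : c ≠ 0) {e : ι → ℝ}
    (he : ∀ x ∈ M, e x = c) (f : (ι → κ) → ℝ≥0) : mixedNorm M e f = blockNorm M.toFinset c f := by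
  induction M generalizing f with
  | nil => exact (blockNorm_empty hc f).symm
  | cons x M ih =>
    simp only [List.forall_mem_cons] at he
    rw [List.nodup_cons] at hM
    rw [mixedNorm_cons, he.1, ih hM.2 he.2, List.toFinset_cons,
      blockNorm_insert (by simpa using hM.1) hc]

theorem sum_eq_mixedNorm [Fintype ι] (F : (ι → κ) → ℝ≥0) (i : ι → κ) :
    ∑ i, F i = mixedNorm univ.toList (fun _ => 1) F i := by
  rw [mixedNorm_eq_blockNorm (nodup_toList _) one_ne_zero (fun _ _ => rfl), toList_toFinset]
  simp only [blockNorm, rpow_one, div_one]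
  exact Fintype.sum_equiv ((Equiv.subtypeUnivEquiv mem_univ).arrowCongr (Equiv.refl κ)).symm _ _
    fun g => congrArg F <| funext fun x => by simp [updateOn]

theorem blockNorm_rpow (s : Finset ι) (c : ℝ) {r : ℝ} (hr : r ≠ 0) (f : (ι → κ) → ℝ≥0) :
    blockNorm s (c / r) (fun i => f i ^ r) = fun i => blockNorm s c f i ^ r := by
  funext i
  simp only [blockNorm, ← rpow_mul, mul_div_cancel₀ c hr, one_div_div, one_div_mul_eq_div]

theorem mixedNorm_le_blockNorm_blockNorm_compl [Fintype ι] (S : Finset ι) {a b : ℝ}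
    (ha : 1 ≤ a) (hab : a ≤ b) (f : (ι → κ) → ℝ≥0) :
    mixedNorm univ.toList (fun x => if x ∈ S then a else b) f
      ≤ blockNorm S a (blockNorm Sᶜ b f) := by
  refine (mixedNorm_le_mixedNorm_filter S (fun x => by split_ifs <;> linarith)
    (fun x hx y hy => by simp [hx, hy, hab]) _ f).trans_eq ?_
  have hcompl : (univ.toList.filter (· ∉ S)).toFinset = Sᶜ := by ext; simp
  have hS : (univ.toList.filter (· ∈ S)).toFinset = S := by ext; simp
  rw [mixedNorm_append,
    mixedNorm_eq_blockNorm ((nodup_toList _).filter _) (by linarith : a ≠ 0)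
      (fun x hx => if_pos (by simpa using (List.mem_filter.1 hx).2)),
    mixedNorm_eq_blockNorm ((nodup_toList _).filter _) (by linarith : b ≠ 0)
      (fun x hx => if_neg (by simpa using (List.mem_filter.1 hx).2)), hcompl, hS]

end MixedNorm

theorem Finset.card_filter_mem_powersetCard_mul {α : Type*} [Fintype α] [DecidableEq α] {k : ℕ}
    (hk : 1 ≤ k) (x : α) :
    #{S ∈ powersetCard k (univ : Finset α) | x ∈ S} * Fintype.card α
      = (Fintype.card α).choose k * k := by
  have h := card_filter_powersetCard_subset {x} univ k (subset_univ _) (by simpa using hk)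
  simp only [singleton_subset_iff, card_singleton, card_univ] at h
  obtain ⟨n, hn⟩ := Nat.exists_eq_add_one.mpr (Fintype.card_pos_iff.mpr ⟨x⟩)
  obtain ⟨j, rfl⟩ := Nat.exists_eq_add_one.mpr hk
  rw [h, hn, Nat.add_sub_cancel, Nat.add_sub_cancel, mul_comm, Nat.add_one_mul_choose_eq]

theorem Finset.sum_powersetCard_ite_mem_mul {α : Type*} [Fintype α] [DecidableEq α] {k : ℕ}
    (hk : 1 ≤ k) (x : α) (u v : ℝ) :
    (∑ S ∈ powersetCard k (univ : Finset α), if x ∈ S then u else v) * Fintype.card α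
      = (Fintype.card α).choose k * (k * u + (Fintype.card α - k) * v) := by
  have hmem : (#{S ∈ powersetCard k (univ : Finset α) | x ∈ S} : ℝ) * Fintype.card α
      = (Fintype.card α).choose k * k := by
    exact_mod_cast card_filter_mem_powersetCard_mul hk x
  have hsplit := card_filter_add_card_filter_not (s := powersetCard k (univ : Finset α)) (x ∈ ·)
  rw [card_powersetCard, card_univ] at hsplit
  rw [sum_ite, sum_const, sum_const, nsmul_eq_mul, nsmul_eq_mul]
  have hsplit' : (#{S ∈ powersetCard k (univ : Finset α) | x ∈ S} : ℝ)
      + #{S ∈ powersetCard k (univ : Finset α) | x ∉ S} = (Fintype.card α).choose k := by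
    exact_mod_cast hsplit
  linear_combination (u - v) * hmem + v * Fintype.card α * hsplit'

theorem Nat.le_mul_choose {m k : ℕ} (hk : 1 ≤ k) (hkm : k ≤ m) : m ≤ k * m.choose k := by
  obtain ⟨n, rfl⟩ := Nat.exists_eq_add_one.mpr (hk.trans hkm)
  obtain ⟨j, rfl⟩ := Nat.exists_eq_add_one.mpr hk
  rw [mul_comm, ← Nat.add_one_mul_choose_eq]
  exact Nat.le_mul_of_pos_right _ (Nat.choose_pos (by omega))

theorem blei_exponent_le {m k : ℕ} (hk1 : 1 ≤ k) (hkm : k ≤ m) {p q s : ℝ} (hp : 0 < p)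
    (hs : 0 < s) (hq : 0 ≤ q) (hexp : (k : ℝ) / s + ((m : ℝ) - k) / q = (m : ℝ) / p) :
    p ≤ s * m.choose k := by
  have hk : (0 : ℝ) < k := by exact_mod_cast hk1
  have hks : (k : ℝ) * p ≤ m * s := by
    have : (k : ℝ) / s ≤ m / p := hexp ▸ le_add_of_nonneg_right
      (div_nonneg (sub_nonneg.2 (by exact_mod_cast hkm)) hq)
    rwa [div_le_div_iff₀ hs hp] at this
  have hmk : (m : ℝ) ≤ k * m.choose k := by exact_mod_cast Nat.le_mul_choose hk1 hkm
  nlinarith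

theorem blei_weights_sum {m k : ℕ} (hk1 : 1 ≤ k) (hkm : k ≤ m) {p q s : ℝ} (hp : 0 < p) (hs : 0 < s)
    (hq : 0 < q) (hexp : (k : ℝ) / s + ((m : ℝ) - k) / q = (m : ℝ) / p) (x : Fin m) :
    ∑ S ∈ powersetCard k univ,
      (if x ∈ S then p / m.choose k / s else p / m.choose k / q) = 1 := by
  have h := sum_powersetCard_ite_mem_mul hk1 x (p / m.choose k / s) (p / m.choose k / q)
  have hC : (m.choose k : ℝ) ≠ 0 := by exact_mod_cast (Nat.choose_pos hkm).ne'
  have hm : (m : ℝ) ≠ 0 := Nat.cast_ne_zero.2 (by omega)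
  rw [Fintype.card_fin] at h
  apply mul_right_cancel₀ hm
  rw [h, one_mul]
  field_simp at hexp ⊢
  linear_combination hexp

theorem updateOn_compl_updateOn {m n : ℕ} (S : Finset (Fin m)) (i : Fin m → Fin n)
    (g : S → Fin n) (h : ↥Sᶜ → Fin n) : updateOn Sᶜ (updateOn S i g) h = combineIdx S g h := by
  funext x
  by_cases hx : x ∈ S <;> simp [updateOn, combineIdx, hx]

theorem blockNorm_blockNorm_compl_apply {m n : ℕ} (S : Finset (Fin m)) (s q : ℝ)
    (b : (Fin m → Fin n) → ℝ≥0) (i : Fin m → Fin n) :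
    blockNorm S s (blockNorm Sᶜ q b) i
      = (∑ g : S → Fin n, (∑ h : ↥Sᶜ → Fin n, b (combineIdx S g h) ^ q) ^ (s / q)) ^ (1 / s) := by
  simp only [blockNorm, updateOn_compl_updateOn, ← rpow_mul, one_div_mul_eq_div]

theorem blei_nnreal {m n k : ℕ} (hk1 : 1 ≤ k) (hkm : k ≤ m) {p q s : ℝ} (hp : 1 ≤ p)
    (hs : 1 ≤ s) (hqs : s ≤ q) (hexp : (k : ℝ) / s + ((m : ℝ) - k) / q = (m : ℝ) / p)
    (b : (Fin m → Fin n) → ℝ≥0) :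
    (∑ i, b i ^ p) ^ (1 / p) ≤
      ∏ S ∈ powersetCard k univ,
        (∑ g : S → Fin n, (∑ h : ↥Sᶜ → Fin n, b (combineIdx S g h) ^ q) ^ (s / q)) ^
          ((1 / s) * (1 / (m.choose k : ℝ))) := by
  rcases isEmpty_or_nonempty (Fin m → Fin n) with hempty | hnonempty
  · rw [Fintype.sum_empty, zero_rpow (by positivity)]
    exact zero_le
  obtain ⟨i₀⟩ := hnonempty
  have hp0 : 0 < p := by linarith
  have hs0 : 0 < s := by linarith
  have hq0 : 0 < q := by linarith
  have hC : (0 : ℝ) < m.choose k := by exact_mod_cast Nat.choose_pos hkm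
  set C : ℝ := (m.choose k : ℝ)
  set r : ℝ := p / C
  have hr : 0 < r := by positivity
  have hrs : 1 ≤ s / r := by
    rw [one_le_div hr, div_le_iff₀ hC]
    exact blei_exponent_le hk1 hkm hp0 hs0 hq0.le hexp
  set T := powersetCard k (univ : Finset (Fin m))
  have hweights : ∀ x, ∑ S ∈ T, 1 / (if x ∈ S then s / r else q / r) = 1 := fun x => by
    refine (sum_congr rfl fun S _ => ?_).trans (blei_weights_sum hk1 hkm hp0 hs0 hq0 hexp x)
    split_ifs <;> exact one_div_div _ _
  calc (∑ i, b i ^ p) ^ (1 / p)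
      = (mixedNorm univ.toList (fun _ => 1) (∏ _S ∈ T, fun i => b i ^ r) i₀) ^ (1 / p) := by
        rw [← sum_eq_mixedNorm]
        congr 1
        refine sum_congr rfl fun i _ => ?_
        rw [prod_apply, prod_const, card_powersetCard, card_univ, Fintype.card_fin,
          ← rpow_natCast, ← rpow_mul, div_mul_cancel₀ p hC.ne']
    _ ≤ (∏ S ∈ T, mixedNorm univ.toList (fun x => if x ∈ S then s / r else q / r)
          (fun i => b i ^ r) i₀) ^ (1 / p) := by
        gcongr
        simpa only [prod_apply] using mixedNorm_prod_le _ T _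
          (fun S _ x => by split_ifs <;> positivity) hweights (fun _ i => b i ^ r) i₀
    _ ≤ (∏ S ∈ T, blockNorm S (s / r) (blockNorm Sᶜ (q / r) (fun i => b i ^ r)) i₀) ^ (1 / p) := by
        gcongr with S
        exact mixedNorm_le_blockNorm_blockNorm_compl S hrs (by gcongr) _ i₀
    _ = ∏ S ∈ T, (blockNorm S s (blockNorm Sᶜ q b) i₀) ^ (1 / C) := by
        simp only [blockNorm_rpow _ _ hr.ne', ← finsetProd_rpow, ← rpow_mul]
        congr! 2
        rw [mul_one_div, div_div_cancel_left' hp0.ne', one_div]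
    _ = _ := by simp only [blockNorm_blockNorm_compl_apply, ← rpow_mul]

theorem blei_general_exponents_general {m n k : ℕ} (hk1 : 1 ≤ k) (hkm : k ≤ m)
    (p q s : ℝ) (hp : 1 ≤ p) (hs : 1 ≤ s) (hqs : s ≤ q)
    (hexp : (k : ℝ) / s + ((m : ℝ) - k) / q = (m : ℝ) / p)
    (a : (Fin m → Fin n) → ℂ) :
    (∑ i : Fin m → Fin n, ‖a i‖ ^ p) ^ (1 / p) ≤
      ∏ S ∈ Finset.powersetCard k (Finset.univ : Finset (Fin m)),
        ((∑ g : {x // x ∈ S} → Fin n,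
            (∑ h : {x // x ∈ Sᶜ} → Fin n,
              ‖a (combineIdx S g h)‖ ^ q) ^ (s / q)) ^
          ((1 / s) * (1 / (Nat.choose m k : ℝ)))) := by
  have h := NNReal.coe_le_coe.2 (blei_nnreal hk1 hkm hp hs hqs hexp fun i => ‖a i‖₊)
  push_cast at h
  exact h

/-- Blei-type inequality with general exponents (remark after Theorem 2.2). -/
theorem blei_general_exponents {m n k : ℕ} (hk1 : 1 ≤ k) (hkm : k ≤ m)
    (p q s : ℝ) (hp : 1 ≤ p) (hq : 1 ≤ q) (hs : 1 ≤ s) (hqs : s ≤ q)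
    (hexp : (k : ℝ) / s + ((m : ℝ) - k) / q = (m : ℝ) / p)
    (a : (Fin m → Fin n) → ℂ) :
    (∑ i : Fin m → Fin n, ‖a i‖ ^ p) ^ (1 / p) ≤
      ∏ S ∈ Finset.powersetCard k (Finset.univ : Finset (Fin m)),
        ((∑ g : {x // x ∈ S} → Fin n,
            (∑ h : {x // x ∈ Sᶜ} → Fin n,
              ‖a (combineIdx S g h)‖ ^ q) ^ (s / q)) ^
          ((1 / s) * (1 / (Nat.choose m k : ℝ)))) :=
  blei_general_exponents_general hk1 hkm p q s hp hs hqs hexp a
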